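/- Let U, V be supertropical monoids and α: U → V a map. If U and V are supertropical semirings, then α is an h-transmission if and only if α is a semiring homomorphism. -/

import Mathlib

universe u v w

class STM (U : Type u) extends CommMonoid U, Zero U where
  zero_mul' : ∀ x : U, 0 * x = 0
  e : U
  e_idem : e * e = e
  ghost_zero : ∀ x : U, e * x = 0 → x = 0
  le : U → U → Prop
  le_refl : ∀ x : U, le x x
  le_trans : ∀ x y z : U, le x y → le y z → le x z
  le_total : ∀ x y : U, le x y ∨ le y x
  le_antisymm : ∀ x y : U, e * x = x → e * y = y → le x y → le y x → x = y
  le_e : ∀ x y : U, le x y ↔ le (e * x) (e * y)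
  mul_le_mul : ∀ x y z : U, le x y → le (x * z) (y * z)
  zero_le : ∀ x : U, le 0 x

namespace STM

variable {U : Type u} [STM U]

/-- `x` is a ghost element, i.e. `x ∈ eU`. -/
def Ghost (x : U) : Prop := e * x = x

/-- strict inequality for the ordering of the ghost ideal -/
def slt (x y : U) : Prop := le x y ∧ ¬ le y x

open scoped Classical in
/-- the forced addition on a supertropical monoid -/
noncomputable def add (x y : U) : U :=
  if slt (e * x) (e * y) then y
  else if slt (e * y) (e * x) then x
  else e * x

/-- the supertropical monoid `U` "is" a (supertropical) semiring: the forced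
addition is associative and distributive. -/
def IsSemiring (U : Type u) [STM U] : Prop :=
  (∀ x y z : U, add (add x y) z = add x (add y z)) ∧
  (∀ x y z : U, add x y * z = add (x * z) (y * z))

end STM

open STM

/-- A transmission between supertropical monoids. -/
structure IsTransmission {U : Type u} {V : Type v} [STM U] [STM V] (α : U → V) : Prop where
  map_zero : α 0 = 0
  map_one : α 1 = 1
  map_mul : ∀ x y : U, α (x * y) = α x * α y
  map_e : α (STM.e : U) = (STM.e : V)
  mono : ∀ x y : U, Ghost x → Ghost y → STM.le x y → STM.le (α x) (α y)


/-- An h-transmission between supertropical monoids. -/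
def IsHTransmission {U : Type u} {V : Type v} [STM U] [STM V] (α : U → V) : Prop :=
  IsTransmission α ∧
  ∀ x y : U, slt (STM.e * x) (STM.e * y) → α (STM.e * x) = α (STM.e * y) → Ghost (α y)

/-! The forced sum `x + y` is whichever of `x`, `y` is larger in the ghost order, and the ghost
`e x` when `e x = e y`. A transmission weakly preserves that order, so it can only fail to be
additive when it collapses `e x < e y` to `α (e x) = α (e y)`; then `x + y = y` is sent to
`α x + α y = e α y`, and the h-condition says precisely that `α y` is a ghost. Conversely, an
additive map sends `e = 1 + 1` to `e`, is monotone because `x < y` gives `y = x + y`, and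
satisfies the h-condition because `e x < e y` gives `y = e x + y`. -/

namespace STM

variable {U : Type u} [STM U]

lemma e_mul_e_mul (x : U) : (e : U) * (e * x) = e * x := by
  rw [← mul_assoc, e_idem]

lemma ghost_e_mul (x : U) : Ghost ((e : U) * x) := e_mul_e_mul x

lemma slt_or_eq_of_le {a b : U} (ha : Ghost a) (hb : Ghost b) (h : le a b) :
    slt a b ∨ a = b := by
  by_cases hba : le b a
  · exact .inr (STM.le_antisymm a b ha hb h hba)
  · exact .inl ⟨h, hba⟩

lemma slt_trichotomy {a b : U} (ha : Ghost a) (hb : Ghost b) :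
    slt a b ∨ a = b ∨ slt b a := by
  rcases STM.le_total a b with h | h
  · exact (slt_or_eq_of_le ha hb h).imp_right .inl
  · rcases slt_or_eq_of_le hb ha h with h | h
    · exact .inr (.inr h)
    · exact .inr (.inl h.symm)

lemma add_of_slt {x y : U} (h : slt ((e : U) * x) (e * y)) : add x y = y := by
  rw [add, if_pos h]

lemma add_of_slt' {x y : U} (h : slt ((e : U) * y) (e * x)) : add x y = x := by
  rw [add, if_neg (fun h' => h'.2 h.1), if_pos h]

lemma slt_irrefl (a : U) : ¬ slt a a := fun h => h.2 h.1

lemma add_of_e_mul_eq {x y : U} (h : (e : U) * x = e * y) : add x y = e * x := by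
  rw [add, h, if_neg (slt_irrefl _), if_neg (slt_irrefl _)]

lemma add_self (x : U) : add x x = e * x := add_of_e_mul_eq rfl

lemma add_comm (x y : U) : add x y = add y x := by
  rcases slt_trichotomy (ghost_e_mul x) (ghost_e_mul y) with h | h | h
  · rw [add_of_slt h, add_of_slt' h]
  · rw [add_of_e_mul_eq h, add_of_e_mul_eq h.symm, h]
  · rw [add_of_slt h, add_of_slt' h]

lemma le_add (x y : U) : le x (add x y) := by
  rcases slt_trichotomy (ghost_e_mul x) (ghost_e_mul y) with h | h | h
  · rw [add_of_slt h]
    exact (STM.le_e x y).2 h.1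
  · rw [add_of_e_mul_eq h, STM.le_e, e_mul_e_mul]
    exact STM.le_refl _
  · rw [add_of_slt' h]
    exact STM.le_refl x

end STM

section Maps

variable {U : Type u} {V : Type v} [STM U] [STM V] {α : U → V}

lemma IsTransmission.map_e_mul (hα : IsTransmission α) (x : U) : α (e * x) = e * α x := by
  rw [hα.map_mul, hα.map_e]

lemma IsHTransmission.map_add_of_slt (hα : IsHTransmission α) {x y : U}
    (h : slt ((e : U) * x) (e * y)) : α (add x y) = add (α x) (α y) := by
  have hle : le ((e : V) * α x) (e * α y) := by
    simpa only [hα.1.map_e_mul] using hα.1.mono _ _ (ghost_e_mul x) (ghost_e_mul y) h.1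
  rw [add_of_slt h]
  rcases slt_or_eq_of_le (ghost_e_mul _) (ghost_e_mul _) hle with h' | h'
  · exact (add_of_slt h').symm
  · have hy : Ghost (α y) := hα.2 x y h (by rw [hα.1.map_e_mul, hα.1.map_e_mul, h'])
    rw [add_of_e_mul_eq h', h', hy]

lemma IsHTransmission.map_add (hα : IsHTransmission α) (x y : U) :
    α (add x y) = add (α x) (α y) := by
  rcases slt_trichotomy (ghost_e_mul x) (ghost_e_mul y) with h | h | h
  · exact hα.map_add_of_slt h
  · have h' : (e : V) * α x = e * α y := by rw [← hα.1.map_e_mul, ← hα.1.map_e_mul, h]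
    rw [add_of_e_mul_eq h, add_of_e_mul_eq h', hα.1.map_e_mul]
  · rw [STM.add_comm, STM.add_comm (α x)]
    exact hα.map_add_of_slt h

lemma map_e_of_map_add (h1 : α 1 = 1) (hadd : ∀ x y : U, α (add x y) = add (α x) (α y)) :
    α (e : U) = e := by
  simpa only [add_self, mul_one, h1] using hadd 1 1

lemma mono_of_map_add (hadd : ∀ x y : U, α (add x y) = add (α x) (α y)) {x y : U}
    (hx : Ghost x) (hy : Ghost y) (hxy : le x y) : le (α x) (α y) := by
  rcases slt_or_eq_of_le hx hy hxy with h | rfl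
  · have hsum : add x y = y := add_of_slt (by rwa [hx, hy])
    rw [← hsum, hadd]
    exact STM.le_add _ _
  · exact STM.le_refl _

lemma ghost_of_map_add (hmul : ∀ x y : U, α (x * y) = α x * α y) (he : α (e : U) = e)
    (hadd : ∀ x y : U, α (add x y) = add (α x) (α y)) {x y : U}
    (h : slt ((e : U) * x) (e * y)) (hxy : α (e * x) = α (e * y)) : Ghost (α y) := by
  have map_e_mul (z : U) : α (e * z) = e * α z := by rw [hmul, he]
  have hsum : add (e * x) y = y := add_of_slt (by rwa [e_mul_e_mul])
  have hghost : (e : V) * α (e * x) = e * α y := by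
    rw [← map_e_mul, e_mul_e_mul, hxy, map_e_mul]
  rw [Ghost, ← hsum, hadd, add_of_e_mul_eq hghost, e_mul_e_mul]

end Maps

theorem hTransmission_iff_semiring_hom_general {U : Type u} {V : Type v} [STM U] [STM V]
    (α : U → V) :
    IsHTransmission α ↔
      (α 0 = 0 ∧ α 1 = 1 ∧ (∀ x y : U, α (x * y) = α x * α y) ∧
        ∀ x y : U, α (add x y) = add (α x) (α y)) := by
  constructor
  · intro hα
    exact ⟨hα.1.map_zero, hα.1.map_one, hα.1.map_mul, hα.map_add⟩
  · rintro ⟨h0, h1, hmul, hadd⟩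
    have he : α (e : U) = e := map_e_of_map_add h1 hadd
    exact ⟨⟨h0, h1, hmul, he, fun _ _ => mono_of_map_add hadd⟩,
      fun _ _ => ghost_of_map_add hmul he hadd⟩

/-- Between supertropical semirings, a map is an h-transmission iff it is a semiring
homomorphism (for the forced additions). -/
theorem hTransmission_iff_semiring_hom {U : Type u} {V : Type v} [STM U] [STM V]
    (hU : IsSemiring U) (hV : IsSemiring V) (α : U → V) :
    IsHTransmission α ↔
      (α 0 = 0 ∧ α 1 = 1 ∧ (∀ x y : U, α (x * y) = α x * α y) ∧
        ∀ x y : U, α (add x y) = add (α x) (α y)) :=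
  hTransmission_iff_semiring_hom_general α
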